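/- In an almost zero-dimensional space, every closed σC-set is a C-set. -/
import Mathlib


open Set TopologicalSpace

/-- A C-set: an intersection of clopen subsets. -/
def IsCSet {X : Type*} [TopologicalSpace X] (A : Set X) : Prop :=
  ∃ S : Set (Set X), (∀ s ∈ S, IsClopen s) ∧ A = ⋂₀ S

/-- A σC-set: a countable union of C-sets. -/
def IsSigmaCSet {X : Type*} [TopologicalSpace X] (A : Set X) : Prop :=
  ∃ f : ℕ → Set X, (∀ n, IsCSet (f n)) ∧ A = ⋃ n, f n

/-- Almost zero-dimensional: every point has a neighborhood basis of C-sets. -/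
def AlmostZeroDimensional (X : Type*) [TopologicalSpace X] : Prop :=
  ∀ x : X, ∀ U ∈ nhds x, ∃ A : Set X, IsCSet A ∧ A ∈ nhds x ∧ A ⊆ U

/-- Cohesive: every point has a neighborhood containing no non-empty clopen set. -/
def Cohesive (X : Type*) [TopologicalSpace X] : Prop :=
  ∀ x : X, ∃ U ∈ nhds x, ∀ A : Set X, A ⊆ U → IsClopen A → A = ∅

/-- Zero-dimensional: every point has a neighborhood basis of clopen sets. -/
def ZeroDimensional (X : Type*) [TopologicalSpace X] : Prop :=
  ∀ x : X, ∀ U ∈ nhds x, ∃ V : Set X, IsClopen V ∧ x ∈ V ∧ V ⊆ U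

/-- C-sets are closed. -/
lemma IsCSet.isClosed {X : Type*} [TopologicalSpace X] {A : Set X} (h : IsCSet A) :
    IsClosed A := by
  obtain ⟨S, hS, rfl⟩ := h
  exact isClosed_sInter fun s hs => (hS s hs).isClosed

/-- The union of two C-sets is a C-set. -/
lemma IsCSet.union {X : Type*} [TopologicalSpace X] {A B : Set X}
    (hA : IsCSet A) (hB : IsCSet B) : IsCSet (A ∪ B) := by
  obtain ⟨S, hS, rfl⟩ := hA
  obtain ⟨T, hT, rfl⟩ := hB
  refine ⟨image2 (· ∪ ·) S T, ?_, ?_⟩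
  · rintro s ⟨u, hu, v, hv, rfl⟩
    exact (hS u hu).union (hT v hv)
  · ext x
    simp only [mem_sInter, mem_union, mem_image2]
    constructor
    · rintro (h | h) s ⟨u, hu, v, hv, rfl⟩
      · exact Or.inl (h u hu)
      · exact Or.inr (h v hv)
    · intro h
      by_contra hc
      push_neg at hc
      obtain ⟨⟨u, hu, hxu⟩, ⟨v, hv, hxv⟩⟩ := hc
      rcases h (u ∪ v) ⟨u, hu, v, hv, rfl⟩ with h' | h'
      · exact hxu h'
      · exact hxv h'

lemma isCSet_empty {X : Type*} [TopologicalSpace X] : IsCSet (∅ : Set X) :=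
  ⟨{∅}, by rintro s rfl; exact isClopen_empty, by simp⟩

lemma isCSet_biUnion_finset {X ι : Type*} [TopologicalSpace X] (s : Finset ι)
    {f : ι → Set X} (h : ∀ i ∈ s, IsCSet (f i)) : IsCSet (⋃ i ∈ s, f i) := by
  classical
  revert h
  induction s using Finset.induction with
  | empty => intro _; simpa using isCSet_empty
  | @insert i s hi ih =>
    intro h
    rw [Finset.set_biUnion_insert]
    exact (h _ (Finset.mem_insert_self _ _)).union
      (ih fun j hj => h j (Finset.mem_insert_of_mem hj))

/-- In a second-countable space, two disjoint C-sets can be separated by a clopen set. -/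
lemma csets_separation {X : Type*} [TopologicalSpace X] [SecondCountableTopology X]
    {B C : Set X} (hB : IsCSet B) (hC : IsCSet C) (hBC : B ∩ C = ∅) :
    ∃ G : Set X, IsClopen G ∧ B ⊆ G ∧ G ∩ C = ∅ := by
  classical
  by_cases hBe : B = ∅
  · exact ⟨∅, isClopen_empty, by simp [hBe], by simp⟩
  obtain ⟨xB, hxB⟩ := Set.nonempty_iff_ne_empty.mpr hBe
  obtain ⟨S, hS, hBS⟩ := hB
  obtain ⟨T, hT, hCT⟩ := hC
  -- the complements of members of S ∪ T cover X
  have hcover : ⋃ s : ↥(S ∪ T), ((s : Set X))ᶜ = univ := by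
    rw [eq_univ_iff_forall]
    intro z
    by_contra hz
    simp only [mem_iUnion, mem_compl_iff, not_exists, not_not] at hz
    have hzB : z ∈ B := by
      rw [hBS]; exact fun s hs => hz ⟨s, Or.inl hs⟩
    have hzC : z ∈ C := by
      rw [hCT]; exact fun s hs => hz ⟨s, Or.inr hs⟩
    have : z ∈ B ∩ C := ⟨hzB, hzC⟩
    rw [hBC] at this
    exact this
  have hSTclopen : ∀ s : ↥(S ∪ T), IsClopen (s : Set X) := by
    rintro ⟨s, hs | hs⟩
    · exact hS s hs
    · exact hT s hs
  obtain ⟨T', hT'c, hT'eq⟩ := TopologicalSpace.isOpen_iUnion_countable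
    (fun s : ↥(S ∪ T) => ((s : Set X))ᶜ) (fun s => (hSTclopen s).compl.isOpen)
  have hT'ne : T'.Nonempty := by
    by_contra h
    rw [not_nonempty_iff_eq_empty] at h
    rw [h] at hT'eq
    have : (xB : X) ∈ (⋃ s ∈ (∅ : Set ↥(S ∪ T)), ((s : Set X))ᶜ) := by
      rw [hT'eq, hcover]; trivial
    simp at this
  obtain ⟨g, hg⟩ := hT'c.exists_eq_range hT'ne
  set u : ℕ → Set X := fun n => ((g n : ↥(S ∪ T)) : Set X) with hu
  have hu_clopen : ∀ n, IsClopen (u n) := fun n => hSTclopen (g n)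
  have hu_dichotomy : ∀ n, B ⊆ u n ∨ C ⊆ u n := by
    intro n
    rcases (g n).2 with h | h
    · left; rw [hBS]; exact sInter_subset_of_mem h
    · right; rw [hCT]; exact sInter_subset_of_mem h
  have hu_cover : ∀ z : X, ∃ n, z ∉ u n := by
    intro z
    have hz : z ∈ ⋃ s ∈ T', ((s : Set X))ᶜ := by
      rw [hT'eq, hcover]; trivial
    rw [hg] at hz
    simp only [mem_iUnion, mem_compl_iff] at hz
    obtain ⟨s, ⟨n, rfl⟩, hzn⟩ := hz
    exact ⟨n, hzn⟩
  -- disjointify into clopen pieces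
  set P : ℕ → Set X := fun n => (u n)ᶜ ∩ ⋂ m ∈ Finset.range n, u m with hP
  have hP_clopen : ∀ n, IsClopen (P n) :=
    fun n => ((hu_clopen n).compl).inter (isClopen_biInter_finset fun m _ => hu_clopen m)
  have hP_mem : ∀ z n, z ∈ P n ↔ z ∉ u n ∧ ∀ m < n, z ∈ u m := by
    intro z n
    simp [hP, mem_iInter, Finset.mem_range]
  have hP_cover : ∀ z : X, ∃ n, z ∈ P n := by
    intro z
    refine ⟨Nat.find (hu_cover z), (hP_mem _ _).mpr ⟨Nat.find_spec (hu_cover z), ?_⟩⟩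
    intro m hm
    by_contra h
    exact Nat.find_min (hu_cover z) hm h
  have hP_disj : ∀ m n, m < n → ∀ z, z ∈ P m → z ∈ P n → False := by
    intro m n hmn z hzm hzn
    exact ((hP_mem z m).mp hzm).1 (((hP_mem z n).mp hzn).2 m hmn)
  refine ⟨⋃ n, ⋃ _ : C ⊆ u n, P n, ⟨?_, ?_⟩, ?_, ?_⟩
  · -- closed
    have hcompl : (⋃ n, ⋃ _ : C ⊆ u n, P n)ᶜ = ⋃ n, ⋃ _ : ¬ C ⊆ u n, P n := by
      ext z
      simp only [mem_compl_iff, mem_iUnion, not_exists]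
      constructor
      · intro hz
        obtain ⟨n, hzn⟩ := hP_cover z
        by_cases h : C ⊆ u n
        · exact absurd hzn (hz n h)
        · exact ⟨n, h, hzn⟩
      · rintro ⟨n, hn, hzn⟩ m hm hzm
        rcases lt_trichotomy m n with h | rfl | h
        · exact hP_disj m n h z hzm hzn
        · exact hn hm
        · exact hP_disj n m h z hzn hzm
    rw [← isOpen_compl_iff, hcompl]
    exact isOpen_iUnion fun n => isOpen_iUnion fun _ => (hP_clopen n).isOpen
  · exact isOpen_iUnion fun n => isOpen_iUnion fun _ => (hP_clopen n).isOpen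
  · -- B ⊆ G
    intro b hb
    obtain ⟨n, hbn⟩ := hP_cover b
    rcases hu_dichotomy n with h | h
    · exact absurd (h hb) ((hP_mem b n).mp hbn).1
    · exact mem_iUnion.mpr ⟨n, mem_iUnion.mpr ⟨h, hbn⟩⟩
  · -- G ∩ C = ∅
    rw [eq_empty_iff_forall_notMem]
    rintro z ⟨hzG, hzC⟩
    simp only [mem_iUnion] at hzG
    obtain ⟨n, hn, hzn⟩ := hzG
    exact ((hP_mem z n).mp hzn).1 (hn hzC)

theorem closed_sigmaCSet_isCSet {X : Type*} [TopologicalSpace X]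
    [MetrizableSpace X] [SeparableSpace X] (hX : AlmostZeroDimensional X)
    {A : Set X} (hcl : IsClosed A) (hA : IsSigmaCSet A) : IsCSet A := by
  classical
  letI : MetricSpace X := TopologicalSpace.metrizableSpaceMetric X
  haveI : SecondCountableTopology X := UniformSpace.secondCountable_of_separable X
  obtain ⟨f, hf, hAf⟩ := hA
  -- key step: any point outside `A` lies in a clopen set disjoint from `A`
  have key : ∀ x ∉ A, ∃ E : Set X, IsClopen E ∧ x ∈ E ∧ E ∩ A = ∅ := by
    intro x hx
    -- C-set neighborhoods inside the complement of A
    have hAc : ∀ y : X, y ∈ Aᶜ → ∃ B : Set X, IsCSet B ∧ B ∈ nhds y ∧ B ⊆ Aᶜ :=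
      fun y hy => hX y Aᶜ (hcl.isOpen_compl.mem_nhds hy)
    choose! Bf hBf1 hBf2 hBf3 using hAc
    obtain ⟨T', hT'c, hT'eq⟩ := TopologicalSpace.isOpen_iUnion_countable
      (fun y : ↥(Aᶜ) => interior (Bf y)) (fun y => isOpen_interior)
    have hT'ne : T'.Nonempty := by
      by_contra h
      rw [not_nonempty_iff_eq_empty] at h
      rw [h] at hT'eq
      have hxmem : x ∈ ⋃ y : ↥(Aᶜ), interior (Bf y) :=
        mem_iUnion.mpr ⟨⟨x, hx⟩, mem_interior_iff_mem_nhds.mpr (hBf2 x hx)⟩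
      rw [← hT'eq] at hxmem
      simp at hxmem
    obtain ⟨g, hg⟩ := hT'c.exists_eq_range hT'ne
    -- a countable sequence of C-sets: H 0 is a neighborhood of x, interiors cover Aᶜ
    set H : ℕ → Set X := fun n => Nat.casesOn n (Bf x) (fun m => Bf (g m)) with hH
    have hH_cset : ∀ n, IsCSet (H n) := by
      rintro (_ | m)
      · exact hBf1 x hx
      · exact hBf1 _ (g m).2
    have hH_sub : ∀ n, H n ⊆ Aᶜ := by
      rintro (_ | m)
      · exact hBf3 x hx
      · exact hBf3 _ (g m).2
    have hHx : x ∈ H 0 := mem_of_mem_nhds (hBf2 x hx)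
    have hH_cov : ∀ y ∈ Aᶜ, ∃ n, y ∈ interior (H n) := by
      intro y hy
      have hymem : y ∈ ⋃ s : ↥(Aᶜ), interior (Bf s) :=
        mem_iUnion.mpr ⟨⟨y, hy⟩, mem_interior_iff_mem_nhds.mpr (hBf2 y hy)⟩
      rw [← hT'eq, hg] at hymem
      simp only [mem_iUnion] at hymem
      obtain ⟨s, ⟨m, rfl⟩, hys⟩ := hymem
      exact ⟨m + 1, hys⟩
    -- finite unions of the H's, separated from each f n by a clopen set
    have hK : ∀ n : ℕ, IsCSet (⋃ i ∈ Finset.range (n + 1), H i) :=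
      fun n => isCSet_biUnion_finset _ fun i _ => hH_cset i
    have hsep : ∀ n : ℕ, ∃ G : Set X,
        IsClopen G ∧ (⋃ i ∈ Finset.range (n + 1), H i) ⊆ G ∧ G ∩ f n = ∅ := by
      intro n
      refine csets_separation (hK n) (hf n) ?_
      rw [eq_empty_iff_forall_notMem]
      rintro z ⟨hz1, hz2⟩
      simp only [mem_iUnion] at hz1
      obtain ⟨i, _, hzi⟩ := hz1
      exact hH_sub i hzi (hAf ▸ mem_iUnion.mpr ⟨n, hz2⟩)
    choose G hG1 hG2 hG3 using hsep
    refine ⟨⋂ n, G n, ⟨isClosed_iInter fun n => (hG1 n).isClosed, ?_⟩, ?_, ?_⟩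
    · -- open
      rw [isOpen_iff_forall_mem_open]
      intro z hz
      have hzA : z ∈ Aᶜ := by
        intro hzA
        rw [hAf] at hzA
        obtain ⟨n, hzn⟩ := mem_iUnion.mp hzA
        have : z ∈ G n := mem_iInter.mp hz n
        exact (eq_empty_iff_forall_notMem.mp (hG3 n) z) ⟨this, hzn⟩
      obtain ⟨i, hzi⟩ := hH_cov z hzA
      refine ⟨interior (H i) ∩ ⋂ m ∈ Finset.range i, G m, ?_, ?_, ?_⟩
      · intro w ⟨hw1, hw2⟩
        rw [mem_iInter]
        intro k
        rcases lt_or_ge k i with hk | hk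
        · exact mem_iInter₂.mp hw2 k (Finset.mem_range.mpr hk)
        · exact hG2 k (mem_biUnion (Finset.mem_range.mpr (Nat.lt_succ_of_le hk))
            (interior_subset hw1))
      · exact isOpen_interior.inter (isOpen_biInter_finset fun m _ => (hG1 m).isOpen)
      · exact ⟨hzi, mem_iInter₂.mpr fun m _ => mem_iInter.mp hz m⟩
    · -- x ∈ ⋂ G n
      exact mem_iInter.mpr fun n => hG2 n (mem_biUnion (Finset.mem_range.mpr n.succ_pos) hHx)
    · -- disjoint from A
      rw [eq_empty_iff_forall_notMem]
      rintro z ⟨hz1, hz2⟩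
      rw [hAf] at hz2
      obtain ⟨n, hzn⟩ := mem_iUnion.mp hz2
      exact (eq_empty_iff_forall_notMem.mp (hG3 n) z) ⟨mem_iInter.mp hz1 n, hzn⟩
  -- conclude: A is the intersection of all clopen sets containing it
  refine ⟨{s | IsClopen s ∧ A ⊆ s}, fun s hs => hs.1, ?_⟩
  apply Subset.antisymm
  · intro a ha s hs
    exact hs.2 ha
  · intro z hz
    by_contra hzA
    obtain ⟨E, hE1, hE2, hE3⟩ := key z hzA
    have : z ∈ Eᶜ := hz Eᶜ ⟨hE1.compl, fun a ha haE =>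
      (eq_empty_iff_forall_notMem.mp hE3 a) ⟨haE, ha⟩⟩
    exact this hE2
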